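/- Let λ = l², μ = m², ν = n², ξ = k² with k² − n² = n₂² and m² − l² = l₂², where k = n₂(τ²+1)/(τ²−1), n = n₂·2τ/(τ²−1), m = l₂(ρ²+1)/(ρ²−1), l = l₂·2ρ/(ρ²−1), and l₂n₂ = u²(ρ−1)(τ²−1)/(4(ρ+1)τ²) for some u ∈ ℚ*. Then each of the four quantities 2(k+n₂)(m+l), 2(k+n₂)(m−l), 2(m+l₂)(k+n), 2(m+l₂)(k−n) is a square in ℚ. -/
import Mathlib


/-- Under the parametrization of Corollary 4.8, the four quantities
`2(k+n₂)(m±l)` and `2(m+l₂)(k±n)` are rational squares. -/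
theorem four_squares (ρ τ u l₂ n₂ : ℚ) (hu : u ≠ 0)
    (hρ : ρ ≠ 0 ∧ ρ ≠ 1 ∧ ρ ≠ -1) (hτ : τ ≠ 0 ∧ τ ≠ 1 ∧ τ ≠ -1)
    (hln : l₂ * n₂ = u ^ 2 * (ρ - 1) * (τ ^ 2 - 1) / (4 * (ρ + 1) * τ ^ 2)) :
    ∀ k n m l : ℚ,
      k = n₂ * (τ ^ 2 + 1) / (τ ^ 2 - 1) →
      n = n₂ * (2 * τ) / (τ ^ 2 - 1) →
      m = l₂ * (ρ ^ 2 + 1) / (ρ ^ 2 - 1) →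
      l = l₂ * (2 * ρ) / (ρ ^ 2 - 1) →
      (∃ s : ℚ, 2 * (k + n₂) * (m + l) = s ^ 2) ∧
      (∃ s : ℚ, 2 * (k + n₂) * (m - l) = s ^ 2) ∧
      (∃ s : ℚ, 2 * (m + l₂) * (k + n) = s ^ 2) ∧
      (∃ s : ℚ, 2 * (m + l₂) * (k - n) = s ^ 2) := by
  obtain ⟨hρ0, hρ1, hρ1'⟩ := hρ
  obtain ⟨hτ0, hτ1, hτ1'⟩ := hτ
  have hρp : ρ + 1 ≠ 0 := fun h => hρ1' (by linarith)
  have hρm : ρ - 1 ≠ 0 := fun h => hρ1 (by linarith)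
  have hτp : τ + 1 ≠ 0 := fun h => hτ1' (by linarith)
  have hτm : τ - 1 ≠ 0 := fun h => hτ1 (by linarith)
  have hρ2 : ρ ^ 2 - 1 ≠ 0 := by
    intro h; apply hρp; have := mul_ne_zero hρm hρp; apply (this (by ring_nf; linarith)).elim
  have hτ2 : τ ^ 2 - 1 ≠ 0 := by
    intro h; apply hτp; have := mul_ne_zero hτm hτp; apply (this (by ring_nf; linarith)).elim
  have h4 : (4:ℚ) * (ρ + 1) * τ ^ 2 ≠ 0 :=
    mul_ne_zero (mul_ne_zero (by norm_num) hρp) (pow_ne_zero _ hτ0)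
  rw [eq_div_iff h4] at hln
  intro k n m l hk hn hm hl
  subst hk hn hm hl
  refine ⟨⟨u, ?_⟩, ⟨u * (ρ - 1) / (ρ + 1), ?_⟩,
    ⟨ρ * u * (τ + 1) / ((ρ + 1) * τ), ?_⟩, ⟨ρ * u * (τ - 1) / ((ρ + 1) * τ), ?_⟩⟩
  · field_simp
    linear_combination (ρ + 1) * hln
  · field_simp
    linear_combination (ρ - 1) ^ 2 * (ρ + 1) * hln
  · field_simp
    linear_combination ρ ^ 2 * (τ + 1) ^ 2 * (ρ + 1) * hln
  · field_simp
    linear_combination ρ ^ 2 * (τ - 1) ^ 2 * (ρ + 1) * hln
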